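/- arXiv:1404.0154 — 5 statements merged into one kernel-verified Lean document; each statement's English description precedes it below -/
import Mathlib

section
/- Let T be a rooted tree directed toward its root, B a set of leaves, X an edge set, and let b̄(X) be the blue overflow of X. Then for every vertex v incident with an edge of b̄(X) that is neither in B nor a terminal vertex of b̄(X), we have A(v, b̄(X), X) ≥ 0. -/
open Classical

/-- A (possibly infinite) locally finite tree with all edges directed toward the
root: each non-root vertex `v` has a unique outgoing edge `v → parent v`,
encoded by its tail `v`. -/
structure RTree (V : Type*) where
  root : V
  parent : V → V
  parent_root : parent root = root
  reaches : ∀ v, ∃ n : ℕ, parent^[n] v = root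
  locFin : ∀ v, {s | parent s = v ∧ s ≠ root}.Finite

namespace RTree

variable {V : Type*} (T : RTree V)

/-- The upward neighbours of `v`. -/
def children (v : V) : Set V := {s | T.parent s = v ∧ s ≠ T.root}

/-- A leaf is a vertex with no incoming edges. -/
def IsLeaf (v : V) : Prop := T.children v = ∅

/-- `A(v, X)`: in-degree minus out-degree of `v` in the edge set `X`
(edges being encoded by their tails). -/
noncomputable def A (X : Set V) (v : V) : ℤ :=
  ((T.children v ∩ X).ncard : ℤ) - (if v ∈ X ∧ v ≠ T.root then 1 else 0)

/-- `A(v, X, Y) = A(v, X) - A(v, Y)`. -/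
noncomputable def A2 (X Y : Set V) (v : V) : ℤ := T.A X v - T.A Y v

/-- `V(X)`: the vertices incident with an edge of `X`. -/
def VX (X : Set V) : Set V := X ∪ T.parent '' X

/-- `ter X`: the vertices at which no edge of `X` starts. -/
def ter (X : Set V) : Set V := {v | v ∉ X ∨ v = T.root}

/-- An edge set is rayless if it contains no ray of `T`. -/
def Rayless (X : Set V) : Prop :=
  ¬ ∃ f : ℕ → V, (∀ n, f n ∈ X) ∧ ∀ n, T.parent (f (n + 1)) = f n

/-- A leafless forest: every vertex of `V(S)` has an incoming `S`-edge. -/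
def Leafless (S : Set V) : Prop :=
  ∀ v ∈ T.VX S, ∃ s ∈ S, T.parent s = v

/-- The flow `b(X)` to `X` from the leaf set `B`: the union of the edge sets of
those paths starting at a leaf in `B` all of whose interior vertices are not
incident with an edge from `X`. -/
def flow (B X : Set V) : Set V :=
  {e | e ≠ T.root ∧ ∃ b ∈ B, ∃ n : ℕ, T.parent^[n] b = e ∧
    ∀ k, 1 ≤ k → k ≤ n → T.parent^[k] b ∉ T.VX X}

end RTree

/-- Membership in the overflow of `X` for the leaf set `C`, defined by the
recursive construction: start with all edges of `E \ X` starting at a leaf in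
`C`, and repeatedly add any edge `st ∈ E \ (X ∪ current set)` whose tail `s`
has accumulation `A(s, current set, X) ≥ 1`. -/
inductive OvMem {V : Type*} (T : RTree V) (C X : Set V) : V → Prop
  | base (s : V) : s ∈ C → s ∉ X → s ≠ T.root → OvMem T C X s
  | step (s : V) (W : Finset V) : s ∉ X → s ≠ T.root → ↑W ⊆ T.children s →
      (∀ w ∈ W, OvMem T C X w) → (T.children s ∩ X).ncard + 1 ≤ W.card →
      OvMem T C X s

/-- The overflow of `X` for the leaf set `C`. -/
def RTree.ov {V : Type*} (T : RTree V) (C X : Set V) : Set V :=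
  {s | OvMem T C X s}

/-- For every vertex `v` incident with an edge of the blue
overflow `b̄(X)` that is neither in `B` nor a terminal vertex of `b̄(X)`, we
have `A(v, b̄(X), X) ≥ 0`. -/
theorem stmt5 {V : Type*} (T : RTree V) (B X : Set V)
    (hB : ∀ b ∈ B, T.IsLeaf b) (hX : T.root ∉ X) :
    ∀ v ∈ T.VX (T.ov B X), v ∉ B → v ∉ T.ter (T.ov B X) →
      0 ≤ T.A2 (T.ov B X) X v := by
  intro v hvVX hvB hvter
  simp only [RTree.ter, Set.mem_setOf_eq, not_or] at hvter
  obtain ⟨hvov', hvroot⟩ := hvter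
  have hvov : v ∈ T.ov B X := not_not.mp hvov'
  have hvov' : OvMem T B X v := hvov
  cases hvov' with
  | base s hsB _ _ => exact absurd hsB hvB
  | step s W hsX hsroot hWsub hWov hcard =>
    have hfin : (T.children v).Finite := T.locFin v
    have hWsub' : (↑W : Set V) ⊆ T.children v ∩ T.ov B X := fun w hw =>
      ⟨hWsub hw, hWov w hw⟩
    have h1 : W.card ≤ (T.children v ∩ T.ov B X).ncard := by
      have := Set.ncard_le_ncard hWsub' (hfin.inter_of_left _)
      simpa using this
    have h2 : (T.children v ∩ X).ncard + 1 ≤ (T.children v ∩ T.ov B X).ncard :=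
      le_trans hcard h1
    simp only [RTree.A2, RTree.A]
    rw [if_pos ⟨hvov, hvroot⟩, if_neg (by tauto)]
    push_cast
    omega
end

section
/- Let T be a rooted tree directed toward its root, X ⊆ E an edge set and Y ⊆ E. The blue overflow b̄(Y) is legal for the function c : v ↦ A(v, Y). That is, for every nonempty leafless forest S ⊆ b̄(Y), there exists an edge st ∈ S with A(s, b̄(Y) \ S) ≥ A(s, Y) + 1. -/
open Classical

namespace RTree

variable {V : Type*} (T : RTree V)

/-- `S` is illegal for `c` (as a subset of `X`): `S` is a nonempty leafless
forest with `S ⊆ X` and `A(s, X \ S) ≤ c s` for every edge `st ∈ S`. -/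
def Illegal (X : Set V) (c : V → ℤ) (S : Set V) : Prop :=
  S.Nonempty ∧ S ⊆ X ∧ T.Leafless S ∧ ∀ s ∈ S, T.A (X \ S) s ≤ c s

/-- `X` is legal for `c`: no nonempty subset of `X` is illegal for `c`. -/
def Legal (X : Set V) (c : V → ℤ) : Prop := ¬ ∃ S, T.Illegal X c S

end RTree

/-- Graded version of `OvMem`. -/
inductive OvMemN {V : Type*} (T : RTree V) (C X : Set V) : ℕ → V → Prop
  | base (n : ℕ) (s : V) : s ∈ C → s ∉ X → s ≠ T.root → OvMemN T C X n s
  | step (n : ℕ) (s : V) (W : Finset V) : s ∉ X → s ≠ T.root → ↑W ⊆ T.children s →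
      (∀ w ∈ W, OvMemN T C X n w) → (T.children s ∩ X).ncard + 1 ≤ W.card →
      OvMemN T C X (n + 1) s

theorem OvMemN.mono {V : Type*} {T : RTree V} {C X : Set V} {n m : ℕ} {s : V}
    (h : OvMemN T C X n s) (hnm : n ≤ m) : OvMemN T C X m s := by
  induction h generalizing m with
  | base n s h1 h2 h3 => exact .base m s h1 h2 h3
  | step n s W h1 h2 h3 h4 h5 ih =>
    obtain ⟨k, rfl⟩ := Nat.exists_eq_add_of_le hnm
    rw [Nat.add_right_comm]
    exact .step (n + k) s W h1 h2 h3 (fun w hw => ih w hw (Nat.le_add_right n k)) h5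

theorem OvMemN.toOvMem {V : Type*} {T : RTree V} {C X : Set V} {n : ℕ} {s : V}
    (h : OvMemN T C X n s) : OvMem T C X s := by
  induction h with
  | base n s h1 h2 h3 => exact .base s h1 h2 h3
  | step n s W h1 h2 h3 h4 h5 ih => exact .step s W h1 h2 h3 ih h5

theorem OvMem.toN {V : Type*} {T : RTree V} {C X : Set V} {s : V}
    (h : OvMem T C X s) : ∃ n, OvMemN T C X n s := by
  induction h with
  | base s h1 h2 h3 => exact ⟨0, .base 0 s h1 h2 h3⟩
  | step s W h1 h2 h3 h4 h5 ih =>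
    choose f hf using ih
    refine ⟨(W.sup fun w => if hw : w ∈ W then f w hw else 0) + 1,
      .step _ s W h1 h2 h3 (fun w hw => (hf w hw).mono ?_) h5⟩
    have := Finset.le_sup (f := fun w => if hw : w ∈ W then f w hw else 0) hw
    simpa [hw] using this

/-- The blue overflow `b̄(Y)` is legal for the function
`v ↦ A(v, Y)`: for every nonempty leafless forest `S ⊆ b̄(Y)` there is an edge
`st ∈ S` with `A(s, b̄(Y) \ S) ≥ A(s, Y) + 1`. -/
theorem stmt8 {V : Type*} (T : RTree V) (B Y : Set V)
    (hB : ∀ b ∈ B, T.IsLeaf b) (hY : T.root ∉ Y) :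
    ∀ S : Set V, S ⊆ T.ov B Y → S.Nonempty → T.Leafless S →
      ∃ s ∈ S, T.A Y s + 1 ≤ T.A (T.ov B Y \ S) s := by
  intro S hSov ⟨s₀, hs₀⟩ hLL
  -- minimal rank over S
  have hex : ∃ n, ∃ s ∈ S, OvMemN T B Y n s := by
    obtain ⟨n, hn⟩ := (hSov hs₀).toN
    exact ⟨n, s₀, hs₀, hn⟩
  classical
  have hspec := Nat.find_spec hex
  have hmin : ∀ k, k < Nat.find hex → ¬ ∃ s ∈ S, OvMemN T B Y k s :=
    fun k hk => Nat.find_min hex hk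
  generalize hgen : Nat.find hex = n₀ at hspec hmin
  obtain ⟨s, hsS, hsN⟩ := hspec
  refine ⟨s, hsS, ?_⟩
  -- s has a child in S
  have hsVX : s ∈ T.VX S := Or.inl hsS
  obtain ⟨s', hs'S, hps'⟩ := hLL s hsVX
  have hs'ne : s' ≠ T.root := by
    rcases hSov hs'S with h | h <;> assumption
  have hs'child : s' ∈ T.children s := ⟨hps', hs'ne⟩
  -- analyze the derivation of s
  cases hsN with
  | base n _ hsB hsY hsroot =>
    have : T.children s = ∅ := hB s hsB
    simp [this] at hs'child
  | step n _ W hsY hsroot hWch hWmem hWcard =>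
    -- W is disjoint from S
    have hWnotS : ∀ w ∈ W, w ∉ S := by
      intro w hw hwS
      exact hmin n (by omega) ⟨w, hwS, hWmem w hw⟩
    have hWsub : (↑W : Set V) ⊆ T.children s ∩ (T.ov B Y \ S) := by
      intro w hw
      exact ⟨hWch hw, (hWmem w (by exact_mod_cast hw)).toOvMem,
        hWnotS w (by exact_mod_cast hw)⟩
    have hfin : (T.children s ∩ (T.ov B Y \ S)).Finite :=
      (T.locFin s).inter_of_left _
    have hle : W.card ≤ (T.children s ∩ (T.ov B Y \ S)).ncard := by
      rw [← Set.ncard_coe_finset]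
      exact Set.ncard_le_ncard hWsub hfin
    have hsnotov : s ∉ T.ov B Y \ S := fun h => h.2 hsS
    have hA1 : T.A Y s = ((T.children s ∩ Y).ncard : ℤ) := by
      simp [RTree.A, hsY]
    have hA2 : T.A (T.ov B Y \ S) s = ((T.children s ∩ (T.ov B Y \ S)).ncard : ℤ) := by
      simp [RTree.A, hsnotov]
    rw [hA1, hA2]
    have : (T.children s ∩ Y).ncard + 1 ≤ (T.children s ∩ (T.ov B Y \ S)).ncard :=
      le_trans hWcard hle
    exact_mod_cast this
end

section
/- Let T be a locally finite rooted tree directed toward its root, c : V(T) → ℕ, and let X be an edge set that is legal for c. Then there exists a rayless edge set X' ⊆ X such that (1) A(v, X') ≥ c(v) for every vertex v with A(v, X) ≥ c(v), and (2) A(v, X') = A(v, X) for every terminal vertex v of X (i.e., every vertex at which no edge of X starts). -/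
open Classical

/-!
Call an edge of `X` good once all of its `X`-children, or more than `c` of them, are good;
iterating this rule from `∅` assigns every good edge a finite rank. If `X` is legal, every edge
of `X` is good, since the edges that never become good would form an illegal set. Keep the
edges of `X` whose rank is smaller than that of the next edge, together with all edges ending
in a terminal vertex. Ranks strictly decrease along a ray, so this set is rayless, and a
non-terminal vertex `v` with `A(v, X) ≥ c v` keeps the more than `c v` incoming edges that made
it good.
-/

namespace RTree

variable {V : Type*} (T : RTree V)

lemma finite_children_inter (v : V) (X : Set V) : (T.children v ∩ X).Finite :=
  (T.locFin v).inter_of_left X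

lemma A_eq_ncard_of_mem_ter {X : Set V} {v : V} (hv : v ∈ T.ter X) :
    T.A X v = (T.children v ∩ X).ncard := by
  have : ¬(v ∈ X ∧ v ≠ T.root) := fun ⟨h1, h2⟩ => hv.elim (· h1) h2
  simp [A, this]

lemma A_eq_ncard_sub_one_of_notMem_ter {X : Set V} {v : V} (hv : v ∉ T.ter X) :
    T.A X v = (T.children v ∩ X).ncard - 1 := by
  have : v ∈ X ∧ v ≠ T.root := by simpa [ter, not_or] using hv
  simp [A, this]

lemma ncard_sub_one_le_A (X : Set V) (v : V) :
    ((T.children v ∩ X).ncard : ℤ) - 1 ≤ T.A X v := by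
  unfold A
  split_ifs <;> omega

section Decreasing

def decreasingEdges (X : Set V) (r : V → ℕ) : Set V :=
  {x | x ∈ X ∧ x ≠ T.root ∧ (T.parent x ∈ T.ter X ∨ r x < r (T.parent x))}

variable {T}

lemma decreasingEdges_subset (X : Set V) (r : V → ℕ) : T.decreasingEdges X r ⊆ X :=
  fun _ hx => hx.1

lemma rayless_decreasingEdges (X : Set V) (r : V → ℕ) : T.Rayless (T.decreasingEdges X r) := by
  rintro ⟨f, hf, hpar⟩
  obtain ⟨n, hn⟩ := WellFounded.not_rel_apply_succ (r := (· < ·)) (r ∘ f)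
  obtain ⟨-, -, hter | hlt⟩ := hf (n + 1)
  · rw [hpar n] at hter
    rcases hter with h | h
    exacts [h (hf n).1, (hf n).2.1 h]
  · rw [hpar n] at hlt
    exact hn hlt

lemma children_inter_decreasingEdges_of_mem_ter {X : Set V} (r : V → ℕ) {v : V}
    (hv : v ∈ T.ter X) : T.children v ∩ T.decreasingEdges X r = T.children v ∩ X := by
  refine subset_antisymm (Set.inter_subset_inter_right _ (decreasingEdges_subset X r)) ?_
  rintro x ⟨hxv, hxX⟩
  exact ⟨hxv, hxX, hxv.2, Or.inl (hxv.1 ▸ hv)⟩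

lemma A_decreasingEdges_of_mem_ter {X : Set V} (r : V → ℕ) {v : V} (hv : v ∈ T.ter X) :
    T.A (T.decreasingEdges X r) v = T.A X v := by
  have hv' : v ∈ T.ter (T.decreasingEdges X r) := by
    rcases hv with h | h
    exacts [Or.inl fun h' => h h'.1, Or.inr h]
  rw [T.A_eq_ncard_of_mem_ter hv, T.A_eq_ncard_of_mem_ter hv',
    children_inter_decreasingEdges_of_mem_ter r hv]

end Decreasing

section Good

variable (c : V → ℕ) (X : Set V)

def goodStep (G : Set V) : Set V :=
  {e | e ∈ X ∧ (T.children e ∩ X ⊆ G ∨ c e < (T.children e ∩ X ∩ G).ncard)}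

def goodStage (n : ℕ) : Set V := (T.goodStep c X)^[n] ∅

noncomputable def goodRank (x : V) : ℕ := sInf {n | x ∈ T.goodStage c X n}

variable {T c X}

lemma goodStep_mono : Monotone (T.goodStep c X) := by
  intro G H hGH e ⟨heX, he⟩
  refine ⟨heX, he.imp (fun h => h.trans hGH) (fun h => h.trans_le ?_)⟩
  exact Set.ncard_le_ncard (Set.inter_subset_inter_right _ hGH)
    ((T.finite_children_inter e X).inter_of_left _)

lemma goodStage_succ (n : ℕ) :
    T.goodStage c X (n + 1) = T.goodStep c X (T.goodStage c X n) :=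
  Function.iterate_succ_apply' _ n ∅

lemma goodStage_mono : Monotone (T.goodStage c X) :=
  goodStep_mono.monotone_iterate_of_le_map (Set.empty_subset _)

lemma exists_subset_goodStage {s : Set V} (hs : s.Finite) (hsub : s ⊆ ⋃ n, T.goodStage c X n) :
    ∃ n, s ⊆ T.goodStage c X n := by
  rw [← hs.coe_toFinset] at hsub ⊢
  exact goodStage_mono.directed_le.exists_mem_subset_of_finset_subset_biUnion hsub

/-- Every edge has finitely many children, so the `ω`-th stage is already closed. -/
lemma goodStep_iUnion_goodStage_subset :
    T.goodStep c X (⋃ n, T.goodStage c X n) ⊆ ⋃ n, T.goodStage c X n := by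
  rintro e ⟨heX, hall | hmany⟩
  · obtain ⟨n, hn⟩ := exists_subset_goodStage (T.finite_children_inter e X) hall
    exact Set.mem_iUnion.2 ⟨n + 1, goodStage_succ n ▸ ⟨heX, Or.inl hn⟩⟩
  · obtain ⟨n, hn⟩ := exists_subset_goodStage ((T.finite_children_inter e X).inter_of_left _)
      Set.inter_subset_right
    refine Set.mem_iUnion.2 ⟨n + 1, goodStage_succ n ▸ ⟨heX, Or.inr (hmany.trans_le ?_)⟩⟩
    exact Set.ncard_le_ncard (fun x hx => ⟨hx.1, hn hx⟩)
      ((T.finite_children_inter e X).inter_of_left _)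

/-- The edges of `X` outside a prefixed point of `goodStep` form an illegal set, if any. -/
lemma subset_of_goodStep_subset (hlegal : T.Legal X (fun v => (c v : ℤ))) {U : Set V}
    (hU : T.goodStep c X U ⊆ U) : X ⊆ U := by
  by_contra hXU
  refine hlegal ⟨X \ U, Set.sdiff_nonempty.2 hXU, Set.sdiff_subset, ?_, ?_⟩
  · rintro v (hv | ⟨s, hs, rfl⟩)
    · by_contra! hno
      exact hv.2 (hU ⟨hv.1, Or.inl fun x hx => by_contra fun hxU => hno x ⟨hx.2, hxU⟩ hx.1.1⟩)
    · exact ⟨s, hs, rfl⟩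
  · intro s hs
    have hter : s ∈ T.ter (X \ (X \ U)) := Or.inl fun h => h.2 hs
    rw [T.A_eq_ncard_of_mem_ter hter, Set.sdiff_sdiff_right_self, ← Set.inter_assoc]
    by_contra! hmany
    exact hs.2 (hU ⟨hs.1, Or.inr (by exact_mod_cast hmany)⟩)

lemma exists_goodRank_eq_succ {x : V} (hx : x ∈ ⋃ n, T.goodStage c X n) :
    ∃ m, T.goodRank c X x = m + 1 ∧ x ∈ T.goodStep c X (T.goodStage c X m) := by
  have hmem : x ∈ T.goodStage c X (T.goodRank c X x) := Nat.sInf_mem (Set.mem_iUnion.1 hx)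
  rcases h : T.goodRank c X x with _ | m
  · rw [h] at hmem
    exact absurd hmem (Set.notMem_empty x)
  · rw [h, goodStage_succ] at hmem
    exact ⟨m, rfl, hmem⟩

lemma goodRank_le {x : V} {n : ℕ} (hx : x ∈ T.goodStage c X n) : T.goodRank c X x ≤ n :=
  Nat.sInf_le hx

/-- A good edge `v ∉ ter X` of rank `m + 1` has more than `c v` children of rank at most `m`,
and all of them descend in rank towards `v`. -/
lemma le_A_decreasingEdges_goodRank (hgood : X ⊆ ⋃ n, T.goodStage c X n) {v : V}
    (hv : (c v : ℤ) ≤ T.A X v) : (c v : ℤ) ≤ T.A (T.decreasingEdges X (T.goodRank c X)) v := by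
  by_cases hter : v ∈ T.ter X
  · rwa [A_decreasingEdges_of_mem_ter _ hter]
  have hvX : v ∈ X := by_contra fun h => hter (Or.inl h)
  obtain ⟨m, hm, -, hstep⟩ := exists_goodRank_eq_succ (hgood hvX)
  have hmany : c v < (T.children v ∩ X ∩ T.goodStage c X m).ncard := by
    refine hstep.elim (fun hall => ?_) id
    rw [Set.inter_eq_self_of_subset_left hall]
    rw [T.A_eq_ncard_sub_one_of_notMem_ter hter] at hv
    omega
  have hsub : T.children v ∩ X ∩ T.goodStage c X m ⊆
      T.children v ∩ T.decreasingEdges X (T.goodRank c X) := by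
    rintro x ⟨⟨hxv, hxX⟩, hxm⟩
    refine ⟨hxv, hxX, hxv.2, Or.inr ?_⟩
    rw [hxv.1, hm]
    exact Nat.lt_succ_of_le (goodRank_le hxm)
  have hcard := hmany.trans_le (Set.ncard_le_ncard hsub (T.finite_children_inter v _))
  have := T.ncard_sub_one_le_A (T.decreasingEdges X (T.goodRank c X)) v
  omega

end Good

end RTree

theorem stmt9_general {V : Type*} (T : RTree V) (c : V → ℕ) (X : Set V)
    (hlegal : T.Legal X (fun v => (c v : ℤ))) :
    ∃ X' : Set V, X' ⊆ X ∧ T.Rayless X' ∧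
      (∀ v, (c v : ℤ) ≤ T.A X v → (c v : ℤ) ≤ T.A X' v) ∧
      (∀ v ∈ T.ter X, T.A X' v = T.A X v) := by
  have hgood : X ⊆ ⋃ n, T.goodStage c X n :=
    RTree.subset_of_goodStep_subset hlegal RTree.goodStep_iUnion_goodStage_subset
  exact ⟨T.decreasingEdges X (T.goodRank c X), RTree.decreasingEdges_subset X _,
    RTree.rayless_decreasingEdges X _, fun v hv => RTree.le_A_decreasingEdges_goodRank hgood hv,
    fun v hv => RTree.A_decreasingEdges_of_mem_ter _ hv⟩

/-- If `X` is legal for `c`, then there is a rayless `X' ⊆ X`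
such that (1) `A(v, X') ≥ c v` for every `v` with `A(v, X) ≥ c v`, and
(2) `A(v, X') = A(v, X)` for every terminal vertex `v` of `X`. -/
theorem stmt9 {V : Type*} (T : RTree V) (c : V → ℕ) (X : Set V)
    (hX : T.root ∉ X) (hlegal : T.Legal X (fun v => (c v : ℤ))) :
    ∃ X' : Set V, X' ⊆ X ∧ T.Rayless X' ∧
      (∀ v, (c v : ℤ) ≤ T.A X v → (c v : ℤ) ≤ T.A X' v) ∧
      (∀ v ∈ T.ter X, T.A X' v = T.A X v) :=
  stmt9_general T c X hlegal
end

section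
/- Let T be a locally finite rooted tree with root r, edges directed toward r, and disjoint sets B and R of leaves. Then either there exists a strong blue blockage or there exists a red blockage. -/
open Classical

namespace RTree

variable {V : Type*} (T : RTree V)

/-- A red blockage (for blue leaves `B` and red leaves `R`): a rayless edge set
`X` with `V(X) ∩ B = ∅` such that `A(v, X, b(X)) ≥ 0` for every
`v ∈ (V(X) ∪ {r}) \ R`, where `b(X)` is the blue flow to `X`. -/
def RedBlockage (B R X : Set V) : Prop :=
  T.root ∉ X ∧ T.Rayless X ∧ T.VX X ∩ B = ∅ ∧
    ∀ v ∈ (T.VX X ∪ {T.root}) \ R, 0 ≤ T.A2 X (T.flow B X) v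

/-- A blue blockage: defined like a red blockage with the roles of `B` and `R`
swapped. -/
def BlueBlockage (B R X : Set V) : Prop :=
  T.root ∉ X ∧ T.Rayless X ∧ T.VX X ∩ R = ∅ ∧
    ∀ v ∈ (T.VX X ∪ {T.root}) \ B, 0 ≤ T.A2 X (T.flow R X) v

/-- A strong blue blockage: a blue blockage with `A(r, X, r(X)) ≥ 1`. -/
def StrongBlueBlockage (B R X : Set V) : Prop :=
  T.BlueBlockage B R X ∧ 1 ≤ T.A2 X (T.flow R X) T.root

end RTree

/-!
Take `W₂ ⊆ W₁` such that each vertex of `W₁` that is not a red leaf has at least as many children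
in `W₂` as outside `W₁`, and each vertex of `W₂` one more, counting only children of smaller rank.
Letting every vertex of `W₁` select these children gives a rayless edge set `X` (ranks drop along
`X`) into which the blue flow can enter only through children outside `W₁`, so the counts give
`A(v, X, b(X)) ≥ 0`. Such a pair is the nested fixed point `P₂ = lfp`, `P₁ = gfp` of the two
counting conditions, with Kleene stages as ranks. If the root has as many children in `P₂` as
outside `P₁`, this is a red blockage. Otherwise complementation, which swaps the colours and
least with greatest fixed points, makes `(P₂ᶜ, P₁ᶜ)` such a pair for blue, with a surplus of one
at the root: a strong blue blockage.
-/

namespace RTree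

variable {V : Type*} (T : RTree V)

lemma finite_children (v : V) : (T.children v).Finite := T.locFin v

lemma A_le_ncard_children_inter (Y : Set V) (v : V) :
    T.A Y v ≤ (T.children v ∩ Y).ncard := by
  unfold A
  split_ifs <;> omega

lemma ncard_children_sdiff_eq_zero {W : Set V} {v : V} :
    (T.children v \ W).ncard = 0 ↔ T.children v ⊆ W := by
  rw [Set.ncard_eq_zero (T.finite_children v).sdiff, Set.sdiff_eq_empty]

section Flow

variable {T} {E X W : Set V}

lemma disjoint_flow (hE : Disjoint E W) (hW : ∀ v ∈ W, v ∉ T.VX X → T.children v ⊆ W) :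
    Disjoint (T.flow E X) W := by
  suffices h : ∀ n, ∀ b ∈ E, (∀ k, 1 ≤ k → k ≤ n → T.parent^[k] b ∉ T.VX X) →
      T.parent^[n] b ∉ W by
    rw [Set.disjoint_left]
    rintro _ ⟨-, b, hb, n, rfl, hpath⟩
    exact h n b hb hpath
  -- A flow path that meets `W` at a vertex outside `V(X)` came from a child in `W`.
  intro n
  induction n with
  | zero => exact fun b hb _ => Set.disjoint_left.mp hE hb
  | succ n ih =>
    intro b hb hpath he
    have hw : T.parent^[n] b ∉ W := ih b hb fun k hk hkn => hpath k hk (by omega)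
    have heX : T.parent^[n + 1] b ∉ T.VX X := hpath (n + 1) (by omega) le_rfl
    rw [Function.iterate_succ_apply'] at he heX
    by_cases hroot : T.parent^[n] b = T.root
    · rw [hroot, T.parent_root] at he
      exact hw (hroot ▸ he)
    · exact hw (hW _ he heX ⟨rfl, hroot⟩)

lemma A_flow_le (h : Disjoint (T.flow E X) W) (v : V) :
    T.A (T.flow E X) v ≤ (T.children v \ W).ncard := by
  have hsub : T.children v ∩ T.flow E X ⊆ T.children v \ W :=
    fun c hc => ⟨hc.1, Set.disjoint_left.mp h hc.2⟩
  have := Set.ncard_le_ncard hsub (T.finite_children v).sdiff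
  have := T.A_le_ncard_children_inter (T.flow E X) v
  omega

end Flow

def outweigh (E F : Set V) (d : ℕ) (S₂ S₁ : Set V) : Set V :=
  {v | v ∉ E ∧ (v ∈ F ∨ (T.children v \ S₁).ncard + d ≤ (T.children v ∩ S₂).ncard)}

section Outweigh

variable {T} {E F S₁ S₂ S₁' S₂' : Set V} {d d' : ℕ}

lemma outweigh_subset_outweigh (hd : d ≤ d') (h₂ : S₂ ⊆ S₂') (h₁ : S₁ ⊆ S₁') :
    T.outweigh E F d' S₂ S₁ ⊆ T.outweigh E F d S₂' S₁' := by
  rintro v ⟨hvE, hv | hv⟩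
  · exact ⟨hvE, Or.inl hv⟩
  · refine ⟨hvE, Or.inr ?_⟩
    have := Set.ncard_le_ncard (Set.sdiff_subset_sdiff_right (s := T.children v) h₁)
      (T.finite_children v).sdiff
    have := Set.ncard_le_ncard (Set.inter_subset_inter_right (T.children v) h₂)
      ((T.finite_children v).inter_of_left S₂')
    omega

lemma compl_outweigh (hEF : Disjoint E F) (hd : d + d' = 1) :
    (T.outweigh E F d S₂ S₁)ᶜ = T.outweigh F E d' S₁ᶜ S₂ᶜ := by
  ext v
  have hEF' : v ∈ E → v ∉ F := fun h => Set.disjoint_left.mp hEF h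
  simp only [outweigh, Set.mem_compl_iff, Set.mem_ofPred_eq, Set.sdiff_compl, ← Set.sdiff_eq]
  grind

end Outweigh

lemma A_root (Y : Set V) : T.A Y T.root = (T.children T.root ∩ Y).ncard := by
  simp [A]

/-- The edges selected by the root and by `W₁`; ranks drop along consecutive edges in `W₂`, so it
is rayless. -/
def blockageOf (W₁ W₂ : Set V) (ρ : V → ℕ) : Set V :=
  {c | c ≠ T.root ∧ c ∈ W₂ ∧
    (T.parent c = T.root ∨ T.parent c ∈ W₁ ∧ (T.parent c ∈ W₂ → ρ c < ρ (T.parent c)))}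

section Blockage

variable {T} {E F W₁ W₂ : Set V} {ρ : V → ℕ}

lemma root_notMem_blockageOf : T.root ∉ T.blockageOf W₁ W₂ ρ := fun h => h.1 rfl

lemma blockageOf_subset : T.blockageOf W₁ W₂ ρ ⊆ W₂ := fun _ h => h.2.1

lemma rayless_blockageOf : T.Rayless (T.blockageOf W₁ W₂ ρ) := by
  rintro ⟨f, hf, hpar⟩
  refine not_strictAnti_of_wellFoundedLT (ρ ∘ f) (strictAnti_nat_of_succ_lt fun n => ?_)
  obtain ⟨-, -, h | ⟨-, h⟩⟩ := hf (n + 1) <;> rw [hpar] at h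
  · exact absurd h (hf n).1
  · exact h (hf n).2.1

lemma children_root_inter_blockageOf :
    T.children T.root ∩ T.blockageOf W₁ W₂ ρ = T.children T.root ∩ W₂ := by
  ext c
  constructor
  · exact fun ⟨hc, hcX⟩ => ⟨hc, hcX.2.1⟩
  · exact fun ⟨hc, hcW⟩ => ⟨hc, hc.2, hcW, Or.inl hc.1⟩

lemma mem_of_mem_VX_blockageOf (hW : W₂ ⊆ W₁) {v : V} (hv : v ∈ T.VX (T.blockageOf W₁ W₂ ρ))
    (hroot : v ≠ T.root) : v ∈ W₁ := by
  obtain hv | ⟨c, ⟨-, -, hc | hc⟩, rfl⟩ := hv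
  · exact hW hv.2.1
  · exact absurd hc hroot
  · exact hc.1

lemma le_A_blockageOf (h₁ : W₁ ⊆ T.outweigh E F 0 W₂ W₁)
    (h₂ : ∀ v ∈ W₂, v ∈ T.outweigh E F 1 {c ∈ W₂ | ρ c < ρ v} W₁)
    {v : V} (hv : v ∈ W₁) (hvF : v ∉ F) :
    ((T.children v \ W₁).ncard : ℤ) ≤ T.A (T.blockageOf W₁ W₂ ρ) v := by
  have hfin := (T.finite_children v).inter_of_left (T.blockageOf W₁ W₂ ρ)
  by_cases hv₂ : v ∈ W₂
  · obtain ⟨-, hvF' | hcard⟩ := h₂ v hv₂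
    · exact absurd hvF' hvF
    have hsub : T.children v ∩ {c ∈ W₂ | ρ c < ρ v} ⊆ T.children v ∩ T.blockageOf W₁ W₂ ρ :=
      fun c ⟨hc, hcW, hρ⟩ => ⟨hc, hc.2, hcW, Or.inr ⟨hc.1 ▸ hv, fun _ => hc.1 ▸ hρ⟩⟩
    have := Set.ncard_le_ncard hsub hfin
    unfold A
    split_ifs <;> omega
  · obtain ⟨-, hvF' | hcard⟩ := h₁ hv
    · exact absurd hvF' hvF
    have hsub : T.children v ∩ W₂ ⊆ T.children v ∩ T.blockageOf W₁ W₂ ρ :=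
      fun c ⟨hc, hcW⟩ => ⟨hc, hc.2, hcW, Or.inr ⟨hc.1 ▸ hv, fun h => absurd (hc.1 ▸ h) hv₂⟩⟩
    have := Set.ncard_le_ncard hsub hfin
    have hvX : v ∉ T.blockageOf W₁ W₂ ρ := fun h => hv₂ (blockageOf_subset h)
    simp only [A, hvX, false_and, if_false]
    omega

lemma VX_blockageOf_inter (hE : ∀ e ∈ E, T.IsLeaf e) (hW : W₂ ⊆ W₁)
    (h₁ : W₁ ⊆ T.outweigh E F 0 W₂ W₁) : T.VX (T.blockageOf W₁ W₂ ρ) ∩ E = ∅ := by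
  refine Set.eq_empty_iff_forall_notMem.mpr fun v ⟨hv, hvE⟩ => ?_
  by_cases hroot : v = T.root
  · obtain hv | ⟨c, hc, hcv⟩ := hv
    · exact root_notMem_blockageOf (hroot ▸ hv)
    · have hc' : c ∈ T.children T.root := ⟨hroot ▸ hcv, hc.1⟩
      rw [hE _ (hroot ▸ hvE)] at hc'
      exact hc'
  · exact (h₁ (mem_of_mem_VX_blockageOf hW hv hroot)).1 hvE

lemma disjoint_flow_blockageOf (hF : ∀ f ∈ F, T.IsLeaf f) (h₁ : W₁ ⊆ T.outweigh E F 0 W₂ W₁)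
    (h₂ : ∀ v ∈ W₂, v ∈ T.outweigh E F 1 {c ∈ W₂ | ρ c < ρ v} W₁) {δ : ℕ}
    (hroot : (T.children T.root \ W₁).ncard + δ ≤ (T.children T.root ∩ W₂).ncard) :
    Disjoint (T.flow E (T.blockageOf W₁ W₂ ρ)) W₁ := by
  refine disjoint_flow (Set.disjoint_right.mpr fun v hv => (h₁ hv).1) fun v hv hvX => ?_
  by_cases hvF : v ∈ F
  · rw [show T.children v = ∅ from hF v hvF]
    exact Set.empty_subset _
  have hX : T.children v ∩ T.blockageOf W₁ W₂ ρ = ∅ :=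
    Set.eq_empty_iff_forall_notMem.mpr fun c ⟨hc, hcX⟩ => hvX (Or.inr ⟨c, hcX, hc.1⟩)
  rw [← T.ncard_children_sdiff_eq_zero]
  by_cases hvr : v = T.root
  · subst hvr
    rw [← children_root_inter_blockageOf (ρ := ρ) (W₁ := W₁), hX, Set.ncard_empty] at hroot
    omega
  · have := le_A_blockageOf h₁ h₂ hv hvF
    have hvX' : v ∉ T.blockageOf W₁ W₂ ρ := fun h => hvX (Or.inl h)
    simp only [A, hX, hvX', Set.ncard_empty, false_and, if_false] at this
    omega

theorem redBlockage_blockageOf (hE : ∀ e ∈ E, T.IsLeaf e) (hF : ∀ f ∈ F, T.IsLeaf f)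
    (hW : W₂ ⊆ W₁) (h₁ : W₁ ⊆ T.outweigh E F 0 W₂ W₁)
    (h₂ : ∀ v ∈ W₂, v ∈ T.outweigh E F 1 {c ∈ W₂ | ρ c < ρ v} W₁) {δ : ℕ}
    (hroot : (T.children T.root \ W₁).ncard + δ ≤ (T.children T.root ∩ W₂).ncard) :
    T.RedBlockage E F (T.blockageOf W₁ W₂ ρ) ∧
      δ ≤ T.A2 (T.blockageOf W₁ W₂ ρ) (T.flow E (T.blockageOf W₁ W₂ ρ)) T.root := by
  have hflow := A_flow_le (disjoint_flow_blockageOf hF h₁ h₂ hroot)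
  have hA2root : δ ≤ T.A2 (T.blockageOf W₁ W₂ ρ) (T.flow E (T.blockageOf W₁ W₂ ρ)) T.root := by
    have := hflow T.root
    rw [A2, A_root, children_root_inter_blockageOf]
    omega
  refine ⟨⟨root_notMem_blockageOf, rayless_blockageOf, VX_blockageOf_inter hE hW h₁,
    fun v ⟨hv, hvF⟩ => ?_⟩, hA2root⟩
  have := hflow v
  by_cases hvr : v = T.root
  · exact hvr ▸ le_trans (by positivity) hA2root
  · have hv₁ := mem_of_mem_VX_blockageOf hW (hv.resolve_right hvr) hvr
    have := le_A_blockageOf h₁ h₂ hv₁ hvF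
    rw [A2]
    omega

end Blockage

theorem compl_gfp_eq_lfp {α : Type*} [CompleteBooleanAlgebra α] (f g : α →o α)
    (h : ∀ a, g a = (f aᶜ)ᶜ) : f.gfpᶜ = g.lfp := by
  apply le_antisymm
  · rw [← compl_le_compl_iff_le, compl_compl]
    apply f.le_gfp
    rw [← compl_compl (f g.lfpᶜ), ← h, g.map_lfp]
  · apply g.lfp_le
    rw [h, compl_compl, f.map_gfp]

def outweighHom (E F : Set V) (d : ℕ) (S₁ : Set V) : Set V →o Set V :=
  ⟨fun S₂ => T.outweigh E F d S₂ S₁, fun _ _ h => outweigh_subset_outweigh le_rfl h subset_rfl⟩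

section Rank

variable {T} {E F S₁ : Set V} {d : ℕ}

lemma outweigh_iUnion_subset {c : ℕ → Set V} (hc : Monotone c) :
    T.outweigh E F d (⋃ n, c n) S₁ ⊆ ⋃ n, T.outweigh E F d (c n) S₁ := by
  rintro v ⟨hvE, hv | hv⟩
  · exact Set.mem_iUnion.mpr ⟨0, hvE, Or.inl hv⟩
  have hfin := (T.finite_children v).inter_of_left (⋃ n, c n)
  obtain ⟨N, hN⟩ := hc.directed_le.exists_mem_subset_of_finset_subset_biUnion
    (s := hfin.toFinset) fun x hx => ((Set.Finite.mem_toFinset hfin).mp hx).2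
  have hsub : T.children v ∩ ⋃ n, c n ⊆ T.children v ∩ c N :=
    fun x hx => ⟨hx.1, hN ((Set.Finite.mem_toFinset hfin).mpr hx)⟩
  have := Set.ncard_le_ncard hsub ((T.finite_children v).inter_of_left _)
  exact Set.mem_iUnion.mpr ⟨N, hvE, Or.inr (by omega)⟩

lemma ωScottContinuous_outweighHom :
    OmegaCompletePartialOrder.ωScottContinuous (T.outweighHom E F d S₁) :=
  OmegaCompletePartialOrder.ωScottContinuous.of_map_ωSup_of_orderHom fun c => Set.Subset.antisymm
    (outweigh_iUnion_subset c.monotone)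
    (Set.iUnion_subset fun n => (T.outweighHom E F d S₁).mono (Set.subset_iUnion c n))

end Rank

/-- The rank of a vertex is the first Kleene iterate containing it; local finiteness makes the
iteration reach the least fixed point after `ω` steps. -/
theorem exists_rank (E F W : Set V) (d : ℕ) :
    ∃ ρ : V → ℕ, ∀ v ∈ (T.outweighHom E F d W).lfp,
      v ∈ T.outweigh E F d {c ∈ (T.outweighHom E F d W).lfp | ρ c < ρ v} W := by
  set f := T.outweighHom E F d W
  have hlfp : f.lfp = ⋃ n, f^[n] ∅ := fixedPoints.lfp_eq_sSup_iterate f ωScottContinuous_outweighHom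
  refine ⟨fun v => sInf {n | v ∈ f^[n] ∅}, fun v hv => ?_⟩
  have hex : {n | v ∈ f^[n] ∅}.Nonempty := Set.mem_iUnion.mp (hlfp ▸ hv)
  have hmem : v ∈ f^[sInf {n | v ∈ f^[n] ∅}] ∅ := Nat.sInf_mem hex
  obtain ⟨k, hk⟩ := Nat.exists_eq_succ_of_ne_zero fun h => (h ▸ hmem : v ∈ f^[0] ∅)
  rw [hk, Function.iterate_succ_apply'] at hmem
  refine outweigh_subset_outweigh le_rfl (fun c hc => ?_) subset_rfl hmem
  refine ⟨?_, ?_⟩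
  · exact hlfp ▸ Set.mem_iUnion.mpr ⟨k, hc⟩
  · change sInf _ < sInf _
    rw [hk]
    exact Nat.lt_succ_of_le (Nat.sInf_le hc)

def weakRegion (E F S₂ : Set V) : Set V :=
  OrderHom.gfp ⟨fun S₁ => T.outweigh E F 0 S₂ S₁,
    fun _ _ h => outweigh_subset_outweigh le_rfl subset_rfl h⟩

lemma weakRegion_eq (E F S₂ : Set V) :
    T.outweigh E F 0 S₂ (T.weakRegion E F S₂) = T.weakRegion E F S₂ :=
  OrderHom.map_gfp ⟨fun S₁ => T.outweigh E F 0 S₂ S₁, _⟩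

lemma subset_weakRegion {E F S₂ S : Set V} (h : S ⊆ T.outweigh E F 0 S₂ S) :
    S ⊆ T.weakRegion E F S₂ :=
  OrderHom.le_gfp _ h

lemma weakRegion_mono (E F : Set V) : Monotone (T.weakRegion E F) := fun _ _ h =>
  T.subset_weakRegion <| (T.weakRegion_eq E F _).symm.subset.trans <|
    outweigh_subset_outweigh le_rfl h subset_rfl

def strongRegion (E F : Set V) : Set V :=
  OrderHom.lfp ⟨fun S₂ => T.outweigh E F 1 S₂ (T.weakRegion E F S₂),
    fun _ _ h => outweigh_subset_outweigh le_rfl h (T.weakRegion_mono E F h)⟩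

section Regions

variable {T} {E F : Set V}

lemma strongRegion_eq :
    T.outweigh E F 1 (T.strongRegion E F) (T.weakRegion E F (T.strongRegion E F)) =
      T.strongRegion E F :=
  OrderHom.map_lfp ⟨fun S₂ => T.outweigh E F 1 S₂ (T.weakRegion E F S₂), _⟩

lemma strongRegion_subset_weakRegion :
    T.strongRegion E F ⊆ T.weakRegion E F (T.strongRegion E F) := by
  set P₂ := T.strongRegion E F
  set P₁ := T.weakRegion E F P₂
  have hP₂ : P₂ ⊆ T.outweigh E F 0 P₂ (P₂ ∪ P₁) := strongRegion_eq.symm.subset.trans <|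
    outweigh_subset_outweigh zero_le_one subset_rfl Set.subset_union_right
  have hP₁ : P₁ ⊆ T.outweigh E F 0 P₂ (P₂ ∪ P₁) := (T.weakRegion_eq E F P₂).symm.subset.trans <|
    outweigh_subset_outweigh le_rfl subset_rfl Set.subset_union_right
  exact Set.subset_union_left.trans (T.subset_weakRegion (Set.union_subset hP₂ hP₁))

lemma strongRegion_eq_lfp :
    T.strongRegion E F = (T.outweighHom E F 1 (T.weakRegion E F (T.strongRegion E F))).lfp := by
  set L := (T.outweighHom E F 1 (T.weakRegion E F (T.strongRegion E F))).lfp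
  have hL : L ⊆ T.strongRegion E F := OrderHom.lfp_le _ strongRegion_eq.subset
  refine le_antisymm (OrderHom.lfp_le _ ?_) hL
  calc T.outweigh E F 1 L (T.weakRegion E F L)
      ⊆ T.outweigh E F 1 L (T.weakRegion E F (T.strongRegion E F)) :=
        outweigh_subset_outweigh le_rfl subset_rfl (T.weakRegion_mono E F hL)
    _ = L := (T.outweighHom E F 1 _).map_lfp

lemma compl_weakRegion (hEF : Disjoint E F) (S₂ : Set V) :
    (T.weakRegion E F S₂)ᶜ = (T.outweighHom F E 1 S₂ᶜ).lfp :=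
  compl_gfp_eq_lfp _ _ fun S => by
    change T.outweigh F E 1 S S₂ᶜ = (T.outweigh E F 0 S₂ Sᶜ)ᶜ
    rw [compl_outweigh hEF (zero_add 1), compl_compl]

end Regions

theorem exists_redBlockage_of_eq_lfp {E F W₁ W₂ : Set V} (hE : ∀ e ∈ E, T.IsLeaf e)
    (hF : ∀ f ∈ F, T.IsLeaf f) (hW₂ : W₂ = (T.outweighHom E F 1 W₁).lfp) (hW : W₂ ⊆ W₁)
    (h₁ : W₁ ⊆ T.outweigh E F 0 W₂ W₁) {δ : ℕ}
    (hroot : (T.children T.root \ W₁).ncard + δ ≤ (T.children T.root ∩ W₂).ncard) :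
    ∃ X, T.RedBlockage E F X ∧ δ ≤ T.A2 X (T.flow E X) T.root := by
  obtain ⟨ρ, hρ⟩ := T.exists_rank E F W₁ 1
  rw [← hW₂] at hρ
  exact ⟨_, redBlockage_blockageOf hE hF hW h₁ hρ hroot⟩

theorem exists_redBlockage {B R : Set V} (hB : ∀ b ∈ B, T.IsLeaf b) (hR : ∀ r ∈ R, T.IsLeaf r)
    (h : (T.children T.root \ T.weakRegion B R (T.strongRegion B R)).ncard ≤
      (T.children T.root ∩ T.strongRegion B R).ncard) :
    ∃ X, T.RedBlockage B R X := by
  obtain ⟨X, hX, -⟩ := T.exists_redBlockage_of_eq_lfp (δ := 0) hB hR strongRegion_eq_lfp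
    strongRegion_subset_weakRegion (T.weakRegion_eq B R _).symm.subset h
  exact ⟨X, hX⟩

theorem exists_strongBlueBlockage {B R : Set V} (hB : ∀ b ∈ B, T.IsLeaf b)
    (hR : ∀ r ∈ R, T.IsLeaf r) (hBR : Disjoint B R)
    (h : (T.children T.root ∩ T.strongRegion B R).ncard <
      (T.children T.root \ T.weakRegion B R (T.strongRegion B R)).ncard) :
    ∃ X, T.StrongBlueBlockage B R X := by
  have h₁ : (T.strongRegion B R)ᶜ ⊆
      T.outweigh R B 0 (T.weakRegion B R (T.strongRegion B R))ᶜ (T.strongRegion B R)ᶜ := by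
    rw [← compl_outweigh hBR (add_zero 1), strongRegion_eq]
  have hroot : (T.children T.root \ (T.strongRegion B R)ᶜ).ncard + 1 ≤
      (T.children T.root ∩ (T.weakRegion B R (T.strongRegion B R))ᶜ).ncard := by
    rw [Set.sdiff_compl, ← Set.sdiff_eq]
    omega
  obtain ⟨X, hX, hδ⟩ := T.exists_redBlockage_of_eq_lfp hR hB (compl_weakRegion hBR _)
    (Set.compl_subset_compl.mpr strongRegion_subset_weakRegion) h₁ hroot
  exact ⟨X, hX, hδ⟩

end RTree

/-- Main theorem: For a locally finite rooted tree with disjoint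
sets `B` and `R` of leaves, either there is a strong blue blockage or there is
a red blockage. -/
theorem stmt11 {V : Type*} (T : RTree V) (B R : Set V)
    (hB : ∀ b ∈ B, T.IsLeaf b) (hR : ∀ r ∈ R, T.IsLeaf r)
    (hdisj : Disjoint B R) :
    (∃ X : Set V, T.StrongBlueBlockage B R X) ∨
    (∃ X : Set V, T.RedBlockage B R X) := by
  by_cases h : (T.children T.root \ T.weakRegion B R (T.strongRegion B R)).ncard ≤
      (T.children T.root ∩ T.strongRegion B R).ncard
  · exact Or.inr (T.exists_redBlockage hB hR h)
  · exact Or.inl (T.exists_strongBlueBlockage hB hR hdisj (not_le.mp h))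
end

section
/- Let T be a locally finite tree directed toward a root r, let X_R be a rayless edge set of T, and color the vertices with two colors (green and yellow) as follows: the root is green, and for each non-root vertex s with outgoing edge st, s has the same color as t if st ∈ X_R and the opposite color otherwise. Define 'good' vertices recursively: every yellow vertex is good; a vertex v is good if all its neighbors are good; and if the outgoing edge of v lies in X_R, then v is good already if all its upward neighbors (in-neighbors) are good. Then every vertex is good. -/
open Classical

/-- Adjacency in the tree (as an undirected graph). -/
def RTree.Adj {V : Type*} (T : RTree V) (v w : V) : Prop :=
  (T.parent w = v ∧ w ≠ T.root) ∨ (T.parent v = w ∧ v ≠ T.root)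

/-- The set of good vertices: the smallest set of vertices such that every
yellow vertex (`color v = false`) is good, a vertex all of whose neighbours are
good is good, and a vertex whose outgoing edge lies in `XR` is already good if
all its upward neighbours are good. -/
inductive Good {V : Type*} (T : RTree V) (XR : Set V) (color : V → Bool) : V → Prop
  | yellow (v : V) : color v = false → Good T XR color v
  | all (v : V) : (∀ w, T.Adj v w → Good T XR color w) → Good T XR color v
  | up (v : V) : v ∈ XR → (∀ w ∈ T.children v, Good T XR color w) →
      Good T XR color v

/-- If `XR` is a rayless edge set and the vertices are coloured
green/yellow so that the root is green and a non-root vertex has the same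
colour as its parent iff its outgoing edge is in `XR`, then every vertex is
good. (Green is `true`, yellow is `false`.) -/
theorem stmt12 {V : Type*} (T : RTree V) (XR : Set V)
    (hXR : T.root ∉ XR) (hrayless : T.Rayless XR)
    (color : V → Bool) (hroot : color T.root = true)
    (hcolor : ∀ s, s ≠ T.root →
      color s = if s ∈ XR then color (T.parent s) else !color (T.parent s)) :
    ∀ v, Good T XR color v := by
  -- Key step: a bad vertex has a bad child whose edge lies in XR.
  have key : ∀ v, ¬ Good T XR color v →
      ∃ w, T.parent w = v ∧ w ∈ XR ∧ ¬ Good T XR color w := by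
    intro v hv
    by_contra h'
    push_neg at h'
    -- v is green
    have hvgreen : color v = true := by
      cases h : color v with
      | false => exact absurd (Good.yellow v h) hv
      | true => rfl
    -- all children of v are good
    have hchild : ∀ w ∈ T.children v, Good T XR color w := by
      rintro w ⟨hpw, hwr⟩
      by_cases hwX : w ∈ XR
      · exact h' w hpw hwX
      · apply Good.yellow
        have := hcolor w hwr
        rw [if_neg hwX, hpw, hvgreen] at this
        simpa using this
    apply hv
    by_cases hvX : v ∈ XR
    · exact Good.up v hvX hchild
    · apply Good.all
      intro w hw
      rcases hw with ⟨hpw, hwr⟩ | ⟨hpv, hvr⟩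
      · exact hchild w ⟨hpw, hwr⟩
      · -- w is the parent of v; since v ∉ XR, the parent is yellow
        apply Good.yellow
        have := hcolor v hvr
        rw [if_neg hvX, hvgreen, hpv] at this
        cases h : color w with
        | false => rfl
        | true => rw [h] at this; simp at this
  intro v
  by_contra hv
  -- build a ray of bad XR-vertices
  let F : ℕ → {x : V // ¬ Good T XR color x} := fun n =>
    Nat.rec ⟨v, hv⟩ (fun _ p => ⟨(key p.1 p.2).choose, (key p.1 p.2).choose_spec.2.2⟩) n
  have hF : ∀ n, T.parent (F (n + 1)).1 = (F n).1 ∧ (F (n + 1)).1 ∈ XR := by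
    intro n
    exact ⟨(key (F n).1 (F n).2).choose_spec.1, (key (F n).1 (F n).2).choose_spec.2.1⟩
  exact hrayless ⟨fun n => (F (n + 1)).1, fun n => (hF n).2,
    fun n => (hF (n + 1)).1⟩
end
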